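/- arXiv:1805.08673 — 2 statements merged into one kernel-verified Lean document; each statement's English description precedes it below -/
import Mathlib

section
/- Let W be a windmill with tips a_1, a_2, a_3. Then W contains an {a_1,a_2,a_3}-path whose length is congruent to 0 modulo 4. -/
/-!
Each arm `P i` can be rerouted through `C i` into an `x`–`a i` path of even length: cut `P i` at
its first and last vertices on `C i` and join these two vertices by whichever of the two arcs of
`C i` makes the total length even, which is possible because the two arcs have lengths adding up
to the odd number `|C i|`. Two of the three even lengths agree modulo `4`, and the two paths
concerned meet only in `x`, so together they form an `a i`–`a j` path of length `0` modulo `4`.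
-/

namespace SimpleGraph.Walk

variable {V : Type*} {G : SimpleGraph V}

theorem support_subset_support_of_edges_subset {u v x y : V} {p : G.Walk u v} {q : G.Walk x y}
    (hp : ¬p.Nil) (h : p.edges ⊆ q.edges) : p.support ⊆ q.support := by
  intro w hw
  obtain ⟨e, he, hwe⟩ := (mem_support_iff_exists_mem_edges_of_not_nil hp).1 hw
  have hq : ¬q.Nil := edges_eq_nil.not.mp (List.ne_nil_of_mem (h he))
  exact (mem_support_iff_exists_mem_edges_of_not_nil hq).2 ⟨e, h he, hwe⟩

protected theorem IsPath.append {u v w : V} {p : G.Walk u v} {q : G.Walk v w}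
    (hp : p.IsPath) (hq : q.IsPath) (h : ∀ z ∈ p.support, z ∈ q.support → z = v) :
    (p.append q).IsPath := by
  rw [isPath_def, support_append, List.nodup_append]
  refine ⟨hp.support_nodup, hq.support_nodup.sublist q.support.tail_sublist, ?_⟩
  intro z hzp z' hzq rfl
  have hq' := hq.support_nodup
  rw [← cons_tail_support] at hq'
  exact (List.nodup_cons.1 hq').1 (h z hzp (List.mem_of_mem_tail hzq) ▸ hzq)

theorem exists_eq_append_first_mem {u v z : V} (p : G.Walk u v) (S : Set V)
    (hz : z ∈ p.support) (hzS : z ∈ S) :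
    ∃ w ∈ S, ∃ (q : G.Walk u w) (r : G.Walk w v), p = q.append r ∧
      ∀ y ∈ q.support, y ∈ S → y = w := by
  induction p with
  | nil =>
    rw [support_nil, List.mem_singleton] at hz
    exact ⟨_, hz ▸ hzS, nil, nil, rfl, by simp⟩
  | @cons u u' v h p ih =>
    by_cases hu : u ∈ S
    · exact ⟨u, hu, nil, cons h p, rfl, by simp⟩
    rw [support_cons, List.mem_cons] at hz
    obtain rfl | hz := hz
    · exact absurd hzS hu
    obtain ⟨w, hw, q, r, rfl, hq⟩ := ih hz
    refine ⟨w, hw, cons h q, r, rfl, ?_⟩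
    rintro y hy hyS
    rw [support_cons, List.mem_cons] at hy
    obtain rfl | hy := hy
    · exact absurd hyS hu
    · exact hq y hy hyS

theorem IsPath.exists_eq_append_append_first_last {x y u v : V} {P : G.Walk x y}
    (hP : P.IsPath) (S : Set V) (huv : u ≠ v) (huP : u ∈ P.support) (huS : u ∈ S)
    (hvP : v ∈ P.support) (hvS : v ∈ S) :
    ∃ u' ∈ S, ∃ v' ∈ S, u' ≠ v' ∧ ∃ (A : G.Walk x u') (M : G.Walk u' v') (B : G.Walk v' y),
      P = A.append (M.append B) ∧ (∀ z ∈ A.support, z ∈ S → z = u') ∧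
      (∀ z ∈ B.support, z ∈ S → z = v') := by
  obtain ⟨u', hu'S, A, P', rfl, hA⟩ := exists_eq_append_first_mem P S huP huS
  have hsecond : ∃ w ∈ P'.reverse.support, w ∈ S \ {u'} := by
    have key : ∀ w ∈ (A.append P').support, w ∈ S → w ≠ u' → w ∈ P'.reverse.support :=
      fun w hw hwS hwu => by
        rw [mem_support_append_iff] at hw
        rw [support_reverse, List.mem_reverse]
        exact hw.resolve_left fun hwA => hwu (hA w hwA hwS)
    by_cases hu' : u = u'
    · exact ⟨v, key v hvP hvS (hu' ▸ huv.symm), hvS, hu' ▸ huv.symm⟩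
    · exact ⟨u, key u huP huS hu', huS, hu'⟩
  obtain ⟨w, hw, hsecondS⟩ := hsecond
  obtain ⟨v', ⟨hv'S, hv'u'⟩, D, E, hDE, hD⟩ := exists_eq_append_first_mem P'.reverse _ hw hsecondS
  have hDE_path : (D.append E).IsPath := hDE ▸ hP.of_append_right.reverse
  have hu'D : u' ∉ D.support := fun hu'D =>
    hDE_path.ne_of_mem_support_of_append (Ne.symm hv'u') hu'D E.end_mem_support rfl
  refine ⟨u', hu'S, v', hv'S, Ne.symm hv'u', A, E.reverse, D.reverse, ?_, hA, ?_⟩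
  · rw [← reverse_append, ← hDE, reverse_reverse]
  · intro z hz hzS
    rw [support_reverse, List.mem_reverse] at hz
    exact hD z hz ⟨hzS, fun hzu => hu'D (hzu ▸ hz)⟩

theorem IsPath.replace_middle {x y u v : V} {A : G.Walk x u} {M N : G.Walk u v}
    {B : G.Walk v y} (hP : (A.append (M.append B)).IsPath) (hN : N.IsPath)
    (hNA : ∀ z ∈ N.support, z ∈ A.support → z = u)
    (hNB : ∀ z ∈ N.support, z ∈ B.support → z = v) :
    (A.append (N.append B)).IsPath := by
  have hB : B.IsPath := hP.of_append_right.of_append_right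
  refine hP.of_append_left.append (hN.append hB hNB) fun z hzA hz => ?_
  rcases (mem_support_append_iff _ _).1 hz with hzN | hzB
  · exact hNA z hzN hzA
  · by_contra hzu
    exact hP.ne_of_mem_support_of_append hzu hzA
      ((mem_support_append_iff _ _).2 (Or.inr hzB)) rfl

theorem IsCycle.exists_isPath_isPath_length_add_length [DecidableEq V] {c u v : V}
    {C : G.Walk c c} (hC : C.IsCycle) (hu : u ∈ C.support) (hv : v ∈ C.support) (huv : u ≠ v) :
    ∃ N₁ N₂ : G.Walk u v, N₁.IsPath ∧ N₂.IsPath ∧ N₁.length + N₂.length = C.length ∧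
      N₁.edges ⊆ C.edges ∧ N₂.edges ⊆ C.edges := by
  set C' := C.rotate u hu
  have hv' : v ∈ C'.support := (mem_support_rotate_iff C u hu).2 hv
  have hC' : (C'.takeUntil v hv').append (C'.dropUntil v hv') |>.IsCycle := by
    rw [take_spec]; exact hC.rotate hu
  have hedges : C'.edges ⊆ C.edges := fun e he => (rotate_edges C u hu).mem_iff.1 he
  refine ⟨C'.takeUntil v hv', (C'.dropUntil v hv').reverse,
    hC'.isPath_of_append_left (not_nil_of_ne huv.symm),
    (hC'.isPath_of_append_right (not_nil_of_ne huv)).reverse, ?_,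
    fun e he => hedges (edges_takeUntil_subset_edges _ _ he), ?_⟩
  · rw [length_reverse, ← length_append, take_spec, length_rotate]
  · rw [edges_reverse]
    exact fun e he => hedges (edges_dropUntil_subset_edges _ _ (List.mem_reverse.1 he))

theorem IsCycle.exists_isPath_even_add_length [DecidableEq V] {c u v : V} {C : G.Walk c c}
    (hC : C.IsCycle) (hodd : Odd C.length) (hu : u ∈ C.support) (hv : v ∈ C.support)
    (huv : u ≠ v) (k : ℕ) :
    ∃ N : G.Walk u v, N.IsPath ∧ Even (k + N.length) ∧ N.edges ⊆ C.edges := by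
  obtain ⟨N₁, N₂, hN₁, hN₂, hlen, hN₁C, hN₂C⟩ :=
    hC.exists_isPath_isPath_length_add_length hu hv huv
  rcases Nat.even_or_odd (k + N₁.length) with heven | hodd₁
  · exact ⟨N₁, hN₁, heven, hN₁C⟩
  · refine ⟨N₂, hN₂, ?_, hN₂C⟩
    rw [Nat.odd_iff] at hodd hodd₁
    rw [Nat.even_iff]
    omega

theorem IsPath.exists_isPath_even_length_of_isCycle [DecidableEq V] {x y c u v : V}
    {P : G.Walk x y} {C : G.Walk c c} (hP : P.IsPath) (hC : C.IsCycle) (hodd : Odd C.length)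
    (hPe : s(u, v) ∈ P.edges) (hCe : s(u, v) ∈ C.edges) :
    ∃ Q : G.Walk x y, Q.IsPath ∧ Even Q.length ∧
      Q.edges ⊆ P.edges ++ C.edges ∧ Q.support ⊆ P.support ++ C.support := by
  obtain ⟨u', hu', v', hv', hne, A, M, B, rfl, hA, hB⟩ :=
    hP.exists_eq_append_append_first_last {z | z ∈ C.support} (P.adj_of_mem_edges hPe).ne
      (P.fst_mem_support_of_mem_edges hPe) (C.fst_mem_support_of_mem_edges hCe)
      (P.snd_mem_support_of_mem_edges hPe) (C.snd_mem_support_of_mem_edges hCe)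
  obtain ⟨N, hN, hlen, hNC⟩ :=
    hC.exists_isPath_even_add_length hodd hu' hv' hne (A.length + B.length)
  have hNsupp : N.support ⊆ C.support :=
    support_subset_support_of_edges_subset (not_nil_of_ne hne) hNC
  refine ⟨A.append (N.append B), hP.replace_middle hN (fun z hz hzA => hA z hzA (hNsupp hz))
    (fun z hz hzB => hB z hzB (hNsupp hz)), ?_, ?_, ?_⟩
  · rw [length_append, length_append]
    convert hlen using 1
    omega
  · intro e he
    simp only [edges_append, List.mem_append] at he ⊢
    have := @hNC e
    tauto
  · intro z hz
    simp only [mem_support_append_iff, List.mem_append] at hz ⊢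
    have := @hNsupp z
    tauto

theorem exists_ne_isPath_reverse_append_length_mod_four_eq_zero {ι : Type*} [Fintype ι]
    (hι : 2 < Fintype.card ι) {x : V} {a : ι → V} (Q : ∀ i, G.Walk x (a i))
    (hQ : ∀ i, (Q i).IsPath) (heven : ∀ i, Even (Q i).length)
    (hdisj : ∀ i j, i ≠ j → ∀ z ∈ (Q i).support, z ∈ (Q j).support → z = x) :
    ∃ i j, i ≠ j ∧ ((Q i).reverse.append (Q j)).IsPath ∧
      ((Q i).reverse.append (Q j)).length % 4 = 0 := by
  obtain ⟨i, j, hij, hhalf⟩ := Fintype.exists_ne_map_eq_of_card_lt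
    (fun k => (⟨(Q k).length / 2 % 2, by omega⟩ : Fin 2)) (by simpa using hι)
  refine ⟨i, j, hij, (hQ i).reverse.append (hQ j) fun z hzi hzj => ?_, ?_⟩
  · rw [support_reverse, List.mem_reverse] at hzi
    exact hdisj i j hij z hzi hzj
  · obtain ⟨ri, hri⟩ := heven i
    obtain ⟨rj, hrj⟩ := heven j
    have hhalf' := congrArg Fin.val hhalf
    simp only at hhalf'
    rw [length_append, length_reverse]
    omega

end SimpleGraph.Walk

open SimpleGraph SimpleGraph.Walk

theorem stmt1 {V : Type*} [DecidableEq V] (G : SimpleGraph V)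
    (x : V) (a : Fin 3 → V) (c : Fin 3 → V)
    (P : ∀ i : Fin 3, G.Walk x (a i))
    (C : ∀ i : Fin 3, G.Walk (c i) (c i))
    (hP : ∀ i, (P i).IsPath)
    (hC : ∀ i, (C i).IsCycle)
    (hCodd : ∀ i, Odd (C i).length)
    (hax : ∀ i, a i ≠ x)
    (hPdisj : ∀ i j, i ≠ j → ∀ v, v ∈ (P i).support → v ∈ (P j).support → v = x)
    (hPC : ∀ i, ∃ (u v : V) (R : G.Walk u v), R.IsPath ∧ 1 ≤ R.length ∧
      (∀ e ∈ R.edges, e ∈ (P i).edges) ∧ (∀ e ∈ R.edges, e ∈ (C i).edges) ∧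
      (∀ w, w ∈ (P i).support → w ∈ (C i).support → w ∈ R.support))
    (hCdisj : ∀ i j, i ≠ j → (∀ v ∈ (C i).support, v ∉ (P j).support) ∧
      (∀ v ∈ (C i).support, v ∉ (C j).support)) :
    ∃ (i j : Fin 3), i ≠ j ∧ ∃ p : G.Walk (a i) (a j),
      p.IsPath ∧ p.length % 4 = 0 ∧
      (∀ e ∈ p.edges, (∃ m, e ∈ (P m).edges) ∨ (∃ m, e ∈ (C m).edges)) ∧
      (∀ v ∈ p.support, (∃ m : Fin 3, v = a m) → v = a i ∨ v = a j) := by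
  have hmeet : ∀ i j, i ≠ j → ∀ z ∈ (P i).support ++ (C i).support,
      z ∈ (P j).support ++ (C j).support → z = x := by
    intro i j hij z hzi hzj
    rw [List.mem_append] at hzi hzj
    rcases hzi with hzi | hzi <;> rcases hzj with hzj | hzj
    · exact hPdisj i j hij z hzi hzj
    · exact absurd hzi ((hCdisj j i hij.symm).1 z hzj)
    · exact absurd hzj ((hCdisj i j hij).1 z hzi)
    · exact absurd hzj ((hCdisj i j hij).2 z hzi)
  have heven : ∀ i, ∃ Q : G.Walk x (a i), Q.IsPath ∧ Even Q.length ∧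
      Q.edges ⊆ (P i).edges ++ (C i).edges ∧ Q.support ⊆ (P i).support ++ (C i).support := by
    intro i
    obtain ⟨u, v, R, -, hlen, hRP, hRC, -⟩ := hPC i
    obtain ⟨e, he⟩ := List.exists_mem_of_ne_nil R.edges
      (by rw [Ne, edges_eq_nil, ← length_eq_zero_iff]; omega)
    induction e using Sym2.ind
    exact (hP i).exists_isPath_even_length_of_isCycle (hC i) (hCodd i) (hRP _ he) (hRC _ he)
  choose Q hQ hQeven hQedges hQsupp using heven
  have htip : ∀ k m, a m ∈ (Q k).support → m = k := fun k m hm => by_contra fun hmk =>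
    hax m (hmeet m k hmk (a m) (List.mem_append_left _ (P m).end_mem_support) (hQsupp k hm))
  obtain ⟨i, j, hij, hpath, hlen⟩ := exists_ne_isPath_reverse_append_length_mod_four_eq_zero
    (by simp) Q hQ hQeven fun i j hij z hzi hzj => hmeet i j hij z (hQsupp i hzi) (hQsupp j hzj)
  refine ⟨i, j, hij, _, hpath, hlen, fun e he => ?_, ?_⟩
  · rw [edges_append, edges_reverse, List.mem_append, List.mem_reverse] at he
    rcases he with he | he
    · rcases List.mem_append.1 (hQedges i he) with h | h
      exacts [Or.inl ⟨i, h⟩, Or.inr ⟨i, h⟩]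
    · rcases List.mem_append.1 (hQedges j he) with h | h
      exacts [Or.inl ⟨j, h⟩, Or.inr ⟨j, h⟩]
  · rintro z hz ⟨m, rfl⟩
    rw [mem_support_append_iff, support_reverse, List.mem_reverse] at hz
    exact hz.imp (fun hz => congrArg a (htip i m hz)) fun hz => congrArg a (htip j m hz)
end

section
/- Let H be a graph with vertex sets A, B, X ⊆ V(H), and let t be a positive integer. If H contains 2t pairwise vertex-disjoint A–X paths and t pairwise vertex-disjoint B–X paths, then H contains 2t pairwise vertex-disjoint paths P_1, …, P_{2t} such that P_i is an A–X path for i ≤ t and a B–X path for t < i ≤ 2t; moreover P_1, …, P_t can be chosen among the original 2t A–X paths, and every P_i is contained in the union of the original 3t paths. -/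
/-!
Among all families `S` of `t` disjoint `B`–`X` paths inside `⋃ Q ∪ ⋃ R`, take one using the
fewest edges outside `⋃ Q`. If `S` meets some `Q j`, let `y` be the last vertex of `Q j` on `S`,
say on `S i`. Replacing the part of `S i` after `y` by the tail of `Q j` from `y` gives another
such family, so by minimality the discarded part lies in `⋃ Q`, hence (the `Q`'s being disjoint)
in `Q j`, and `Q j` contains the endpoint of `S i`. Thus `S` meets at most `t` of the `2t` paths
`Q j`, and `t` untouched ones together with `S` form the required family.
-/

structure GPath {V : Type*} (G : SimpleGraph V) where
  a : V
  b : V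
  walk : G.Walk a b
  isPath : walk.IsPath

open SimpleGraph

namespace SimpleGraph.Walk

variable {V : Type*} {G : SimpleGraph V}

theorem IsPath.append_of_support_inter {u v w : V} {p : G.Walk u v} {q : G.Walk v w}
    (hp : p.IsPath) (hq : q.IsPath) (h : ∀ x ∈ p.support, x ∈ q.support → x = v) :
    (p.append q).IsPath := by
  rw [isPath_def, support_append]
  have hq' := q.cons_tail_support ▸ hq.support_nodup
  rw [List.nodup_cons] at hq'
  refine hp.support_nodup.append hq'.2 fun x hxp hxq => ?_
  obtain rfl := h x hxp (q.cons_tail_support ▸ List.mem_cons_of_mem _ hxq)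
  exact hq'.1 hxq

theorem exists_append_at_last (p : V → Prop) {u v : V} (w : G.Walk u v)
    (h : ∃ x ∈ w.support, p x) :
    ∃ y, p y ∧ ∃ (w₁ : G.Walk u y) (w₂ : G.Walk y v),
      w = w₁.append w₂ ∧ ∀ z ∈ w₂.support, p z → z = y := by
  induction w with
  | nil =>
    obtain ⟨x, hx, hpx⟩ := h
    rw [support_nil, List.mem_singleton] at hx
    subst hx
    exact ⟨x, hpx, nil, nil, rfl, fun z hz _ => by simpa using hz⟩
  | @cons u u' v huu' w ih =>
    by_cases hw : ∃ x ∈ w.support, p x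
    · obtain ⟨y, hpy, w₁, w₂, rfl, hlast⟩ := ih hw
      exact ⟨y, hpy, cons huu' w₁, w₂, rfl, hlast⟩
    · have hpu : p u := by
        obtain ⟨x, hx, hpx⟩ := h
        rcases List.mem_cons.mp (support_cons huu' w ▸ hx) with rfl | hx
        · exact hpx
        · exact absurd ⟨x, hx, hpx⟩ hw
      refine ⟨u, hpu, nil, cons huu' w, rfl, fun z hz hpz => ?_⟩
      rcases List.mem_cons.mp (support_cons huu' w ▸ hz) with rfl | hz
      · rfl
      · exact absurd ⟨z, hz, hpz⟩ hw

open scoped Classical in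
noncomputable def numEdgesNotIn (E : Set (Sym2 V)) {u v : V} (w : G.Walk u v) : ℕ :=
  w.edges.countP (· ∉ E)

theorem numEdgesNotIn_append (E : Set (Sym2 V)) {u v w : V} (p : G.Walk u v) (q : G.Walk v w) :
    (p.append q).numEdgesNotIn E = p.numEdgesNotIn E + q.numEdgesNotIn E := by
  simp [numEdgesNotIn, edges_append]

theorem numEdgesNotIn_eq_zero_iff (E : Set (Sym2 V)) {u v : V} (w : G.Walk u v) :
    w.numEdgesNotIn E = 0 ↔ ∀ e ∈ w.edges, e ∈ E := by
  simp [numEdgesNotIn]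

end SimpleGraph.Walk

namespace GPath

open Walk

variable {V : Type*} {G : SimpleGraph V} {ι κ : Type*}

def PairwiseDisjoint (P : ι → GPath G) : Prop :=
  ∀ i j, i ≠ j → ∀ v, v ∈ (P i).walk.support → v ∉ (P j).walk.support

def edgeUnion (P : ι → GPath G) : Set (Sym2 V) :=
  {e | ∃ i, e ∈ (P i).walk.edges}

def Meets (P : GPath G) (S : ι → GPath G) : Prop :=
  ∃ v ∈ P.walk.support, ∃ i, v ∈ (S i).walk.support

structure IsLinkage (B X : Set V) (E : Set (Sym2 V)) (S : ι → GPath G) : Prop where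
  start_mem : ∀ i, (S i).a ∈ B
  end_mem : ∀ i, (S i).b ∈ X
  pairwiseDisjoint : PairwiseDisjoint S
  edges_subset : ∀ i, ∀ e ∈ (S i).walk.edges, e ∈ E

noncomputable def totalEdgesNotIn [Fintype ι] (E : Set (Sym2 V)) (S : ι → GPath G) : ℕ :=
  ∑ i, (S i).walk.numEdgesNotIn E

theorem PairwiseDisjoint.comp {P : ι → GPath G} (hP : PairwiseDisjoint P) {f : κ → ι}
    (hf : f.Injective) : PairwiseDisjoint (P ∘ f) :=
  fun i j hij => hP (f i) (f j) (hf.ne hij)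

theorem PairwiseDisjoint.append {m n : ℕ} {P : Fin m → GPath G} {P' : Fin n → GPath G}
    (hP : PairwiseDisjoint P) (hP' : PairwiseDisjoint P')
    (h : ∀ i j, ∀ v ∈ (P i).walk.support, v ∉ (P' j).walk.support) :
    PairwiseDisjoint (Fin.append P P') := by
  intro i j hij v
  induction i using Fin.addCases with
  | left i =>
    induction j using Fin.addCases with
    | left j =>
      rw [Fin.append_left, Fin.append_left]
      exact hP i j (by simpa using hij) v
    | right j =>
      rw [Fin.append_left, Fin.append_right]
      exact h i j v
  | right i =>
    induction j using Fin.addCases with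
    | left j =>
      rw [Fin.append_right, Fin.append_left]
      exact fun hv hv' => h j i v hv' hv
    | right j =>
      rw [Fin.append_right, Fin.append_right]
      exact hP' i j (by simpa using hij) v

theorem mem_support_of_edges_subset {Q : ι → GPath G} (hQ : PairwiseDisjoint Q) {u v : V}
    (w : G.Walk u v) (hw : ∀ e ∈ w.edges, e ∈ edgeUnion Q) {j : ι}
    (hu : u ∈ (Q j).walk.support) : v ∈ (Q j).walk.support := by
  induction w with
  | nil => exact hu
  | @cons a b c hab w ih =>
    obtain ⟨m, hm⟩ := hw s(a, b) (by simp)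
    obtain rfl : m = j := by
      by_contra hmj
      exact hQ m j hmj _ ((Q m).walk.fst_mem_support_of_mem_edges hm) hu
    exact ih (fun e he => hw e (by simp [he])) ((Q m).walk.snd_mem_support_of_mem_edges hm)

variable {B X : Set V} {E : Set (Sym2 V)}

theorem IsLinkage.update [DecidableEq ι] {S : ι → GPath G} (hS : IsLinkage B X E S) (i : ι)
    {P : GPath G} (hPa : P.a ∈ B) (hPb : P.b ∈ X) (hPE : ∀ e ∈ P.walk.edges, e ∈ E)
    (hP : ∀ k ≠ i, ∀ v ∈ P.walk.support, v ∉ (S k).walk.support) :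
    IsLinkage B X E (Function.update S i P) where
  start_mem k := by
    rw [Function.update_apply]
    split_ifs
    exacts [hPa, hS.start_mem k]
  end_mem k := by
    rw [Function.update_apply]
    split_ifs
    exacts [hPb, hS.end_mem k]
  edges_subset k := by
    rcases eq_or_ne k i with rfl | hk
    · rw [Function.update_self]
      exact hPE
    · rw [Function.update_of_ne hk]
      exact hS.edges_subset k
  pairwiseDisjoint k l hkl v := by
    by_cases hk : k = i <;> by_cases hl : l = i
    · exact absurd (hk.trans hl.symm) hkl
    · subst hk
      rw [Function.update_self, Function.update_of_ne hl]
      exact hP l hl v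
    · subst hl
      rw [Function.update_self, Function.update_of_ne hk]
      exact fun hv hv' => hP k hk v hv' hv
    · rw [Function.update_of_ne hk, Function.update_of_ne hl]
      exact hS.pairwiseDisjoint k l hkl v

theorem totalEdgesNotIn_update [Fintype ι] [DecidableEq ι] (S : ι → GPath G) (i : ι)
    (P : GPath G) :
    totalEdgesNotIn E (Function.update S i P) + (S i).walk.numEdgesNotIn E =
      totalEdgesNotIn E S + P.walk.numEdgesNotIn E := by
  have hupd := Function.apply_update (fun _ Q => Q.walk.numEdgesNotIn E) S i P
  simp only [totalEdgesNotIn, hupd, Finset.sum_update_of_mem (Finset.mem_univ i),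
    Finset.sdiff_singleton_eq_erase, add_assoc, Finset.sum_erase_add _ _ (Finset.mem_univ i)]
  exact add_comm _ _

theorem exists_isLinkage_forall_totalEdgesNotIn_le [Fintype ι] (E' : Set (Sym2 V))
    {R : ι → GPath G} (hR : IsLinkage B X E R) :
    ∃ S : ι → GPath G, IsLinkage B X E S ∧
      ∀ S' : ι → GPath G, IsLinkage B X E S' → totalEdgesNotIn E' S ≤ totalEdgesNotIn E' S' := by
  obtain ⟨S, hS, hmin⟩ :=
    (measure (totalEdgesNotIn (ι := ι) E')).wf.has_min {S | IsLinkage B X E S} ⟨R, hR⟩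
  exact ⟨S, hS, fun S' hS' => not_lt.1 (hmin S' hS')⟩

theorem card_le_of_forall_exists_mem_support [Fintype ι] {Q : κ → GPath G}
    (hQ : PairwiseDisjoint Q) (f : ι → V) (s : Finset κ)
    (h : ∀ j ∈ s, ∃ i, f i ∈ (Q j).walk.support) :
    s.card ≤ Fintype.card ι := by
  choose g hg using h
  calc s.card = Fintype.card s := (Fintype.card_coe s).symm
    _ ≤ Fintype.card ι := Fintype.card_le_of_injective (fun j => g j j.2) fun j k hjk =>
      Subtype.ext <| by_contra fun hne => hQ _ _ hne _ (hg j j.2) <| by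
        rw [show g j j.2 = g k k.2 from hjk]
        exact hg k k.2

theorem IsLinkage.end_mem_of_meets [Fintype ι] {Q : κ → GPath G} {S : ι → GPath G}
    (hS : IsLinkage B X E S)
    (hmin : ∀ S' : ι → GPath G, IsLinkage B X E S' →
      totalEdgesNotIn (edgeUnion Q) S ≤ totalEdgesNotIn (edgeUnion Q) S')
    (hQ : PairwiseDisjoint Q) (hQE : edgeUnion Q ⊆ E) {j : κ} (hjX : (Q j).b ∈ X)
    (hj : (Q j).Meets S) : ∃ i, (S i).b ∈ (Q j).walk.support := by
  classical
  by_contra hno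
  push Not at hno
  obtain ⟨y, ⟨i, hyS⟩, w, T, hsplit, hlast⟩ :=
    (Q j).walk.exists_append_at_last (fun z => ∃ i, z ∈ (S i).walk.support) hj
  have hT : T.IsPath := (hsplit ▸ (Q j).isPath).of_append_right
  have hyQ : y ∈ (Q j).walk.support := hsplit ▸ (mem_support_append_iff w T).2
    (Or.inr T.start_mem_support)
  have hTQ : ∀ e ∈ T.edges, e ∈ edgeUnion Q := fun e he =>
    ⟨j, hsplit ▸ (edges_append w T ▸ List.mem_append_right _ he)⟩
  set p := (S i).walk.takeUntil y hyS
  have hpT : (p.append T).IsPath := ((S i).isPath.takeUntil hyS).append_of_support_inter hT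
    fun z hz hzT => hlast z hzT ⟨i, support_takeUntil_subset_support _ _ hz⟩
  have hlink := hS.update i (P := ⟨(S i).a, (Q j).b, p.append T, hpT⟩) (hS.start_mem i) hjX
    (fun e he => by
      rcases List.mem_append.1 (edges_append p T ▸ he) with he | he
      · exact hS.edges_subset i e (edges_takeUntil_subset_edges _ _ he)
      · exact hQE (hTQ e he))
    (fun k hk z hz hzk => by
      rcases (mem_support_append_iff p T).1 hz with hz | hz
      · exact hS.pairwiseDisjoint i k hk.symm z (support_takeUntil_subset_support _ _ hz) hzk
      · obtain rfl := hlast z hz ⟨k, hzk⟩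
        exact hS.pairwiseDisjoint i k hk.symm z hyS hzk)
  -- Rerouting along `T` adds no edge outside `⋃ Q`, so by minimality the discarded tail of `S i`
  -- has none either.
  have hdrop : ((S i).walk.dropUntil y hyS).numEdgesNotIn (edgeUnion Q) = 0 := by
    have hS_split := numEdgesNotIn_append (edgeUnion Q) p ((S i).walk.dropUntil y hyS)
    rw [take_spec] at hS_split
    have hP_split := numEdgesNotIn_append (edgeUnion Q) p T
    have hT0 := (numEdgesNotIn_eq_zero_iff _ T).2 hTQ
    have hupdate :=
      totalEdgesNotIn_update (E := edgeUnion Q) S i ⟨(S i).a, (Q j).b, p.append T, hpT⟩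
    have hle := hmin _ hlink
    dsimp only at hupdate
    omega
  exact hno i (mem_support_of_edges_subset hQ _ ((numEdgesNotIn_eq_zero_iff _ _).1 hdrop) hyQ)

theorem exists_isLinkage_embedding_not_meets [Fintype ι] [Fintype κ] {Q : κ → GPath G}
    {R : ι → GPath G} (hQ : PairwiseDisjoint Q) (hQX : ∀ j, (Q j).b ∈ X)
    (hQE : edgeUnion Q ⊆ E) (hR : IsLinkage B X E R) {n : ℕ}
    (hn : n + Fintype.card ι ≤ Fintype.card κ) :
    ∃ S : ι → GPath G, IsLinkage B X E S ∧ ∃ σ : Fin n ↪ κ, ∀ k, ¬ (Q (σ k)).Meets S := by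
  classical
  obtain ⟨S, hS, hmin⟩ := exists_isLinkage_forall_totalEdgesNotIn_le (edgeUnion Q) hR
  have hmeet : (Finset.univ.filter fun j => (Q j).Meets S).card ≤ Fintype.card ι :=
    card_le_of_forall_exists_mem_support hQ (fun i => (S i).b) _ fun j hj =>
      hS.end_mem_of_meets hmin hQ hQE (hQX j) (Finset.mem_filter.1 hj).2
  have hfree : Fintype.card (Fin n) ≤ Fintype.card {j // ¬ (Q j).Meets S} := by
    have := Finset.card_filter_add_card_filter_not (s := Finset.univ) fun j => (Q j).Meets S
    rw [Finset.card_univ] at this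
    rw [Fintype.card_fin, Fintype.card_subtype]
    omega
  obtain ⟨σ⟩ := Function.Embedding.nonempty_of_card_le hfree
  exact ⟨S, hS, σ.trans (Function.Embedding.subtype _), fun k => (σ k).2⟩

end GPath

open GPath

theorem stmt5_general {V : Type*} (H : SimpleGraph V) (A B X : Set V) (t : ℕ)
    (Q : Fin (2 * t) → GPath H) (R : Fin t → GPath H)
    (hQ : ∀ i, (Q i).a ∈ A ∧ (Q i).b ∈ X)
    (hR : ∀ i, (R i).a ∈ B ∧ (R i).b ∈ X)
    (hQdisj : ∀ i j, i ≠ j → ∀ v, v ∈ (Q i).walk.support → v ∉ (Q j).walk.support)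
    (hRdisj : ∀ i j, i ≠ j → ∀ v, v ∈ (R i).walk.support → v ∉ (R j).walk.support) :
    ∃ P : Fin (2 * t) → GPath H,
      (∀ i j, i ≠ j → ∀ v, v ∈ (P i).walk.support → v ∉ (P j).walk.support) ∧
      (∀ i : Fin (2 * t), (i : ℕ) < t → (P i).a ∈ A ∧ (P i).b ∈ X ∧ ∃ j, P i = Q j) ∧
      (∀ i : Fin (2 * t), t ≤ (i : ℕ) → (P i).a ∈ B ∧ (P i).b ∈ X) ∧
      (∀ i, ∀ e ∈ (P i).walk.edges,
        (∃ j, e ∈ (Q j).walk.edges) ∨ (∃ j, e ∈ (R j).walk.edges)) := by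
  have hRlink : IsLinkage B X (edgeUnion Q ∪ edgeUnion R) R :=
    ⟨fun i => (hR i).1, fun i => (hR i).2, hRdisj, fun i e he => Or.inr ⟨i, he⟩⟩
  obtain ⟨S, hS, σ, hσ⟩ := exists_isLinkage_embedding_not_meets (n := t) hQdisj
    (fun j => (hQ j).2) Set.subset_union_left hRlink (by simp only [Fintype.card_fin]; omega)
  have hPE :
      ∀ k, ∀ e ∈ (Fin.append (Q ∘ σ) S k).walk.edges, e ∈ edgeUnion Q ∪ edgeUnion R := by
    intro k e he
    induction k using Fin.addCases with
    | left k => exact Or.inl ⟨σ k, by rwa [Fin.append_left] at he⟩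
    | right k => exact hS.edges_subset k e (by rwa [Fin.append_right] at he)
  refine ⟨fun i => Fin.append (Q ∘ σ) S (Fin.cast (two_mul t) i), ?_, fun i hi => ?_,
    fun i hi => ?_, fun i => hPE _⟩
  · exact ((PairwiseDisjoint.comp hQdisj σ.injective).append hS.pairwiseDisjoint
      fun k i v hv hv' => hσ k ⟨v, hv, i, hv'⟩).comp (Fin.cast_injective _)
  · dsimp only
    rw [show Fin.cast (two_mul t) i = Fin.castAdd t ⟨i, hi⟩ from rfl, Fin.append_left]
    exact ⟨(hQ _).1, (hQ _).2, _, rfl⟩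
  · dsimp only
    rw [show Fin.cast (two_mul t) i = Fin.natAdd t ⟨i - t, by omega⟩ from
      Fin.ext (by simp only [Fin.val_cast, Fin.val_natAdd]; omega), Fin.append_right]
    exact ⟨hS.start_mem _, hS.end_mem _⟩

theorem stmt5 {V : Type*} (H : SimpleGraph V) (A B X : Set V) (t : ℕ) (ht : 0 < t)
    (Q : Fin (2 * t) → GPath H) (R : Fin t → GPath H)
    (hQ : ∀ i, (Q i).a ∈ A ∧ (Q i).b ∈ X)
    (hR : ∀ i, (R i).a ∈ B ∧ (R i).b ∈ X)
    (hQdisj : ∀ i j, i ≠ j → ∀ v, v ∈ (Q i).walk.support → v ∉ (Q j).walk.support)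
    (hRdisj : ∀ i j, i ≠ j → ∀ v, v ∈ (R i).walk.support → v ∉ (R j).walk.support) :
    ∃ P : Fin (2 * t) → GPath H,
      (∀ i j, i ≠ j → ∀ v, v ∈ (P i).walk.support → v ∉ (P j).walk.support) ∧
      (∀ i : Fin (2 * t), (i : ℕ) < t → (P i).a ∈ A ∧ (P i).b ∈ X ∧ ∃ j, P i = Q j) ∧
      (∀ i : Fin (2 * t), t ≤ (i : ℕ) → (P i).a ∈ B ∧ (P i).b ∈ X) ∧
      (∀ i, ∀ e ∈ (P i).walk.edges,
        (∃ j, e ∈ (Q j).walk.edges) ∨ (∃ j, e ∈ (R j).walk.edges)) :=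
  stmt5_general H A B X t Q R hQ hR hQdisj hRdisj
end
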